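/- arXiv:2506.13924 — 6 statements merged into one kernel-verified Lean document; each statement's English description precedes it below -/
import Mathlib

section
/- Let Q be a nonempty connected open subset of ℝ² and let J be a non-abelian subgroup of G such that the set {a ∈ ℝ : f_{0,a} ∈ J} is a non-discrete subgroup of ℝ (it has an accumulation point). If f(Q) = Q for every f ∈ J, then Q is either all of ℝ² (Minkowski) or it equals one of the open half-planes ℝ × (0,∞) or ℝ × (−∞,0) (half Minkowski bounded by a lightlike line). -/
noncomputable section

/-- The affine transformation `f_{t,a} : (x,y) ↦ (eᵗ x + a, e⁻ᵗ y)` of the Minkowski plane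
`Mink^{1,1} ≅ ℝ²` in null coordinates, parametrized by `p = (t,a) ∈ ℝ × ℝ`.  These maps
form a copy `G` of `Aff(ℝ)` inside `Isom(Mink^{1,1})`. -/
def fMap (p : ℝ × ℝ) : ℝ × ℝ → ℝ × ℝ :=
  fun q => (Real.exp p.1 * q.1 + p.2, Real.exp (-p.1) * q.2)

lemma scaling_class (V : Set ℝ) (hne : V.Nonempty) (hV : IsOpen V)
    (hc : IsPreconnected V) (l : ℝ) (hl : 1 < l)
    (h1 : ∀ y ∈ V, l * y ∈ V) (h2 : ∀ y ∈ V, l⁻¹ * y ∈ V) :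
    V = Set.univ ∨ V = Set.Ioi 0 ∨ V = Set.Iio 0 := by
  have hl0 : (0:ℝ) < l := lt_trans one_pos hl
  have hoc : V.OrdConnected := hc.ordConnected
  have hpow : ∀ n : ℕ, ∀ y ∈ V, l ^ n * y ∈ V := by
    intro n
    induction n with
    | zero => intro y hy; simpa using hy
    | succ n ih =>
      intro y hy
      have h := h1 _ (ih y hy)
      have : l ^ (n+1) * y = l * (l ^ n * y) := by ring
      rwa [this]
  have hpowinv : ∀ n : ℕ, ∀ y ∈ V, (l ^ n)⁻¹ * y ∈ V := by
    intro n
    induction n with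
    | zero => intro y hy; simpa using hy
    | succ n ih =>
      intro y hy
      have h := h2 _ (ih y hy)
      have : (l ^ (n+1))⁻¹ * y = l⁻¹ * ((l ^ n)⁻¹ * y) := by
        rw [pow_succ, mul_inv]; ring
      rwa [this]
  by_cases h0 : (0:ℝ) ∈ V
  · left
    ext z; simp only [Set.mem_univ, iff_true]
    rcases Metric.isOpen_iff.1 hV 0 h0 with ⟨ε, hε, hball⟩
    obtain ⟨n, hn⟩ := pow_unbounded_of_one_lt (|z| / ε) hl
    have hzlt : |z| < ε * l ^ n := by
      rw [div_lt_iff₀ hε] at hn; nlinarith [pow_pos hl0 n]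
    have hz' : (l ^ n)⁻¹ * z ∈ V := by
      apply hball
      simp only [Metric.mem_ball, Real.dist_eq, sub_zero, abs_mul, abs_inv, abs_pow,
        abs_of_pos hl0]
      rw [inv_mul_eq_div, div_lt_iff₀ (pow_pos hl0 n)]
      linarith
    have := hpow n _ hz'
    rwa [mul_inv_cancel_left₀ (by positivity)] at this
  · have hsub : (∀ y ∈ V, 0 < y) ∨ (∀ y ∈ V, y < 0) := by
      by_contra hcon
      push_neg at hcon
      obtain ⟨⟨a, ha, ha0⟩, ⟨b, hb, hb0⟩⟩ := hcon
      exact h0 (hoc.out ha hb ⟨ha0, hb0⟩)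
    obtain ⟨y₀, hy₀⟩ := hne
    rcases hsub with hpos | hneg
    · right; left
      ext z
      constructor
      · exact fun hz => hpos z hz
      · intro hz
        have hz0 : (0:ℝ) < z := hz
        have hy0 : (0:ℝ) < y₀ := hpos y₀ hy₀
        obtain ⟨n, hn⟩ := pow_unbounded_of_one_lt (y₀ / z) hl
        obtain ⟨m, hm⟩ := pow_unbounded_of_one_lt (z / y₀) hl
        have h1' : (l ^ n)⁻¹ * y₀ ≤ z := by
          rw [inv_mul_eq_div, div_le_iff₀ (pow_pos hl0 n)]
          rw [div_lt_iff₀ hz0] at hn; nlinarith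
        have h2' : z ≤ l ^ m * y₀ := by
          rw [div_lt_iff₀ hy0] at hm; nlinarith
        exact hoc.out (hpowinv n y₀ hy₀) (hpow m y₀ hy₀) ⟨h1', h2'⟩
    · right; right
      ext z
      constructor
      · exact fun hz => hneg z hz
      · intro hz
        have hz0 : z < (0:ℝ) := hz
        have hy0 : y₀ < (0:ℝ) := hneg y₀ hy₀
        obtain ⟨n, hn⟩ := pow_unbounded_of_one_lt (y₀ / z) hl
        obtain ⟨m, hm⟩ := pow_unbounded_of_one_lt (z / y₀) hl
        have h1' : z ≤ (l ^ n)⁻¹ * y₀ := by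
          rw [inv_mul_eq_div, le_div_iff₀ (pow_pos hl0 n)]
          rw [div_lt_iff_of_neg hz0] at hn; linarith
        have h2' : l ^ m * y₀ ≤ z := by
          rw [div_lt_iff_of_neg hy0] at hm; linarith
        exact hoc.out (hpow m y₀ hy₀) (hpowinv n y₀ hy₀) ⟨h2', h1'⟩

/-- Let `Q` be a nonempty connected open subset of `ℝ²`, invariant under a non-abelian
subgroup `J` of `G` whose translation part `{a : f_{0,a} ∈ J}` is non-discrete (has an
accumulation point).  Then `Q` is all of Minkowski space, or a half Minkowski space
bounded by a lightlike line. -/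
theorem invariant_open_set_minkowski_or_half
    (Q : Set (ℝ × ℝ)) (hQne : Q.Nonempty) (hQopen : IsOpen Q) (hQconn : IsConnected Q)
    (J : Set (ℝ × ℝ))
    (hJone : ((0 : ℝ), (0 : ℝ)) ∈ J)
    (hJmul : ∀ p ∈ J, ∀ q ∈ J, (p.1 + q.1, Real.exp p.1 * q.2 + p.2) ∈ J)
    (hJinv : ∀ p ∈ J, (-p.1, -(Real.exp (-p.1) * p.2)) ∈ J)
    (hJnonab : ∃ p ∈ J, ∃ q ∈ J, fMap p ∘ fMap q ≠ fMap q ∘ fMap p)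
    (hJnd : ∃ x : ℝ, AccPt x (Filter.principal {a : ℝ | ((0 : ℝ), a) ∈ J}))
    (hQinv : ∀ p ∈ J, fMap p '' Q = Q) :
    Q = Set.univ ∨ Q = Set.univ ×ˢ Set.Ioi (0 : ℝ) ∨ Q = Set.univ ×ˢ Set.Iio (0 : ℝ) := by
  classical
  -- the translation part is an additive subgroup of ℝ
  have hAadd : ∀ a b : ℝ, ((0:ℝ), a) ∈ J → ((0:ℝ), b) ∈ J → ((0:ℝ), a + b) ∈ J := by
    intro a b ha hb
    have h := hJmul (0, a) ha (0, b) hb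
    rw [add_comm]
    simpa using h
  have hAneg : ∀ a : ℝ, ((0:ℝ), a) ∈ J → ((0:ℝ), -a) ∈ J := by
    intro a ha
    have h := hJinv (0, a) ha
    simpa using h
  set A : Set ℝ := {a : ℝ | ((0:ℝ), a) ∈ J} with hAdef
  let S : AddSubgroup ℝ :=
    { carrier := A
      zero_mem' := hJone
      add_mem' := fun ha hb => hAadd _ _ ha hb
      neg_mem' := fun ha => hAneg _ ha }
  -- A is dense
  have hdense : Dense A := by
    have : Dense (S : Set ℝ) := by
      apply S.dense_of_not_isolated_zero
      intro ε hε
      obtain ⟨x, hx⟩ := hJnd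
      rw [accPt_iff_nhds] at hx
      obtain ⟨a₁, ⟨ha₁b, ha₁A⟩, ha₁x⟩ :=
        hx (Metric.ball x (ε/2)) (Metric.ball_mem_nhds x (by linarith))
      have hr : (0:ℝ) < |a₁ - x| := abs_pos.2 (sub_ne_zero.2 ha₁x)
      obtain ⟨a₂, ⟨ha₂b, ha₂A⟩, ha₂x⟩ :=
        hx (Metric.ball x (|a₁ - x|)) (Metric.ball_mem_nhds x hr)
      rw [Metric.mem_ball, Real.dist_eq] at ha₁b ha₂b
      have hd : |a₁ - a₂| < ε := by
        have h3 : |a₁ - a₂| ≤ |a₁ - x| + |a₂ - x| := by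
          rw [show a₁ - a₂ = (a₁ - x) + (x - a₂) by ring]
          refine (abs_add_le _ _).trans ?_
          rw [abs_sub_comm x a₂]
        linarith
      have hsm : a₁ - a₂ ∈ S := S.sub_mem ha₁A ha₂A
      rcases lt_trichotomy (a₁ - a₂) 0 with h | h | h
      · refine ⟨a₂ - a₁, S.sub_mem ha₂A ha₁A, by linarith, ?_⟩
        rw [abs_of_neg h] at hd; linarith
      · exfalso
        have : a₁ = a₂ := by linarith
        rw [this] at ha₁b
        exact absurd ha₂b (by rw [this]; exact lt_irrefl _)
      · exact ⟨a₁ - a₂, hsm, h, by rwa [abs_of_pos h] at hd⟩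
    exact this
  -- invariance under translations
  have htrans : ∀ a ∈ A, ∀ z ∈ Q, ((z.1 + a : ℝ), z.2) ∈ Q := by
    intro a ha z hz
    have h := hQinv (0, a) ha
    rw [← h]
    exact ⟨z, hz, by simp [fMap]⟩
  -- the vertical slice
  set V : Set ℝ := Prod.snd '' Q with hVdef
  have hVopen : IsOpen V := isOpenMap_snd Q hQopen
  have hVconn : IsPreconnected V :=
    (hQconn.image Prod.snd continuous_snd.continuousOn).isPreconnected
  have hVne : V.Nonempty := hQne.image _
  have hQeq : Q = Set.univ ×ˢ V := by
    ext ⟨x, y⟩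
    constructor
    · intro h
      exact ⟨Set.mem_univ _, ⟨(x, y), h, rfl⟩⟩
    · rintro ⟨-, ⟨⟨x₀, y'⟩, hx₀, rfl⟩⟩
      rcases Metric.isOpen_iff.1 hQopen (x₀, y') hx₀ with ⟨ε, hε, hball⟩
      have hcl := hdense (x - x₀)
      rw [Metric.mem_closure_iff] at hcl
      obtain ⟨a, haA, had⟩ := hcl ε hε
      rw [Real.dist_eq] at had
      have h1 : ((x - a : ℝ), y') ∈ Q := by
        apply hball
        rw [Metric.mem_ball, Prod.dist_eq]
        apply max_lt
        · rw [Real.dist_eq, show x - a - x₀ = x - x₀ - a by ring]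
          exact had
        · simpa using hε
      have h2 := htrans a haA (x - a, y') h1
      simpa using h2
  -- there is an element with nonzero `t`
  have hexT : ∃ r ∈ J, r.1 ≠ 0 := by
    by_contra h
    push_neg at h
    obtain ⟨p, hp, q, hq, hnc⟩ := hJnonab
    apply hnc
    funext z
    simp only [Function.comp_apply, fMap, h p hp, h q hq, Real.exp_zero, neg_zero, one_mul]
    rw [show z.1 + q.2 + p.2 = z.1 + p.2 + q.2 from by ring]
  obtain ⟨r, hrJ, hr0⟩ := hexT
  -- scaling invariance of V
  have hVup : ∀ y ∈ V, Real.exp (-r.1) * y ∈ V := by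
    rintro y ⟨z, hz, rfl⟩
    have h := hQinv r hrJ
    have hz' : fMap r z ∈ Q := by rw [← h]; exact ⟨z, hz, rfl⟩
    exact ⟨fMap r z, hz', rfl⟩
  have hVdown : ∀ y ∈ V, Real.exp r.1 * y ∈ V := by
    rintro y ⟨z, hz, rfl⟩
    have hr' := hJinv r hrJ
    have h := hQinv _ hr'
    have hz' : fMap (-r.1, -(Real.exp (-r.1) * r.2)) z ∈ Q := by
      rw [← h]; exact ⟨z, hz, rfl⟩
    refine ⟨fMap (-r.1, -(Real.exp (-r.1) * r.2)) z, hz', ?_⟩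
    simp [fMap]
  have hne1 : Real.exp r.1 ≠ 1 := by
    simp only [ne_eq, Real.exp_eq_one_iff]; exact hr0
  have hVclass : V = Set.univ ∨ V = Set.Ioi 0 ∨ V = Set.Iio 0 := by
    rcases hne1.lt_or_gt with h | h
    · refine scaling_class V hVne hVopen hVconn (Real.exp (-r.1)) ?_ hVup ?_
      · rw [Real.exp_neg]
        exact (one_lt_inv₀ (Real.exp_pos _)).2 h
      · intro y hy
        have := hVdown y hy
        rwa [Real.exp_neg, inv_inv]
    · refine scaling_class V hVne hVopen hVconn (Real.exp r.1) h hVdown ?_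
      intro y hy
      have := hVup y hy
      rwa [← Real.exp_neg]
  rcases hVclass with h | h | h
  · left; rw [hQeq, h, Set.univ_prod_univ]
  · right; left; rw [hQeq, h]
  · right; right; rw [hQeq, h]
end
end

section
/- For all real numbers s, t, the set of complex eigenvalues of L^E_{s,t} (i.e., the spectrum of the complexified matrix acting on ℂ⁴) equals {t + is, t − is, −t + is, −t − is}; equivalently, the characteristic polynomial of L^E_{s,t} equals (X² − 2tX + t² + s²)(X² + 2tX + t² + s²). -/
open Matrix Polynomial Complex

/-- The derivation `L^E_{s,t}` by which an element of `ℝ × SO°(1,1)` acts on the Heisenberg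
algebra `heis₅` modulo its center, for the "elliptic" symmetric space `X_E`. -/
def LmatE (s t : ℝ) : Matrix (Fin 4) (Fin 4) ℝ :=
  !![0, t, -s, 0; t, 0, 0, s; s, 0, 0, -t; 0, -s, -t, 0]

/-- The complex eigenvalues of `L^E_{s,t}` are `{t + is, t − is, −t + is, −t − is}`;
equivalently, its characteristic polynomial is `(X² − 2tX + t² + s²)(X² + 2tX + t² + s²)`. -/
theorem LmatE_spectrum_and_charpoly (s t : ℝ) :
    spectrum ℂ ((LmatE s t).map (algebraMap ℝ ℂ)) =
      {(t : ℂ) + s * I, (t : ℂ) - s * I, -(t : ℂ) + s * I, -(t : ℂ) - s * I} ∧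
    (LmatE s t).charpoly =
      (X ^ 2 - C (2 * t) * X + C (t ^ 2 + s ^ 2)) *
        (X ^ 2 + C (2 * t) * X + C (t ^ 2 + s ^ 2)) := by
  constructor
  · ext μ
    have hmat : algebraMap ℂ (Matrix (Fin 4) (Fin 4) ℂ) μ - (LmatE s t).map (algebraMap ℝ ℂ) =
        !![μ, -t, s, 0; -t, μ, 0, -s; -s, 0, μ, t; 0, s, t, μ] := by
      ext i j
      fin_cases i <;> fin_cases j <;>
        simp [LmatE, Matrix.algebraMap_eq_diagonal, diagonal_apply]
    have hdet : (algebraMap ℂ (Matrix (Fin 4) (Fin 4) ℂ) μ - (LmatE s t).map (algebraMap ℝ ℂ)).det =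
        (μ - ((t : ℂ) + s * I)) * (μ - ((t : ℂ) - s * I)) *
          ((μ - (-(t : ℂ) + s * I)) * (μ - (-(t : ℂ) - s * I))) := by
      rw [hmat]
      simp [Matrix.det_succ_row_zero, Fin.sum_univ_succ, Fin.succAbove]
      ring_nf
      simp only [I_sq, show (I:ℂ)^4 = 1 by rw [pow_succ, pow_succ, I_sq]; simp]
      ring
    rw [spectrum.mem_iff, Matrix.isUnit_iff_isUnit_det, isUnit_iff_ne_zero, not_ne_iff, hdet]
    simp only [Set.mem_insert_iff, Set.mem_singleton_iff, mul_eq_zero, sub_eq_zero]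
    tauto
  · rw [Matrix.charpoly]
    have h : charmatrix (LmatE s t) =
        !![X, -C t, C s, 0; -C t, X, 0, -C s; -C s, 0, X, C t; 0, C s, C t, X] := by
      ext i j
      fin_cases i <;> fin_cases j <;>
        simp [charmatrix_apply, LmatE, diagonal_apply]
    rw [h]
    simp [Matrix.det_succ_row_zero, Fin.sum_univ_succ, Fin.succAbove]
    simp only [_root_.map_mul, map_add, map_pow, map_ofNat]
    ring
end

section
/- Let s, t ∈ ℝ with s ≠ 0 and t ≠ 0. Then there is no 2-dimensional linear subspace W of ℝ⁴ that is invariant under L^E_{s,t} (i.e., L^E_{s,t}·W ⊆ W) and on which the induced action is unimodular (i.e., the trace of the restriction of L^E_{s,t} to W equals 0). -/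
open Matrix

noncomputable section

set_option maxHeartbeats 1000000 in
private lemma det4_aux (a b : ℝ) :
    (!![a,0,0,b; 0,a,-b,0; 0,b,a,0; -b,0,0,a]).det = (a^2+b^2)^2 := by
  simp [Matrix.det_succ_row_zero, Fin.sum_univ_succ, Fin.castSucc, Fin.castAdd, Fin.castLE]
  simp only [show (Fin.succAbove 3 2 : Fin 4) = 2 from rfl]
  simp
  ring

set_option maxHeartbeats 1000000 in
private lemma LmatE_sq_aux (s t d : ℝ) :
    !![0, t, -s, 0; t, 0, 0, s; s, 0, 0, -t; 0, -s, -t, 0] *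
      !![0, t, -s, 0; t, 0, 0, s; s, 0, 0, -t; 0, -s, -t, 0] +
      d • (1 : Matrix (Fin 4) (Fin 4) ℝ)
    = !![d + t^2 - s^2, 0, 0, 2*s*t;
         0, d + t^2 - s^2, -(2*s*t), 0;
         0, 2*s*t, d + t^2 - s^2, 0;
         -(2*s*t), 0, 0, d + t^2 - s^2] := by
  ext i j
  fin_cases i <;> fin_cases j <;>
    simp [Matrix.mul_apply, Fin.sum_univ_four, Matrix.one_apply] <;> ring

set_option maxHeartbeats 800000 in
/-- For `s ≠ 0` and `t ≠ 0`, there is no `2`-dimensional linear subspace of `ℝ⁴` invariant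
under `L^E_{s,t}` on which the induced action is unimodular (trace zero). -/
theorem no_invariant_unimodular_plane_elliptic (s t : ℝ) (hs : s ≠ 0) (ht : t ≠ 0) :
    ¬ ∃ (W : Submodule ℝ (Fin 4 → ℝ))
        (hW : ∀ x ∈ W, Matrix.toLin' (LmatE s t) x ∈ W),
        Module.finrank ℝ W = 2 ∧
        LinearMap.trace ℝ W ((Matrix.toLin' (LmatE s t)).restrict hW) = 0 := by
  rintro ⟨W, hW, hrank, htr⟩
  -- the restricted endomorphism
  set f := (Matrix.toLin' (LmatE s t)).restrict hW with hfdef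
  -- a basis of W
  let b : Module.Basis (Fin 2) ℝ W := Module.finBasisOfFinrankEq ℝ W hrank
  set A := LinearMap.toMatrix b b f with hA
  have htrA : Matrix.trace A = 0 := by
    rw [hA, ← LinearMap.trace_eq_matrix_trace]; exact htr
  -- Cayley–Hamilton for a trace-zero 2×2 matrix
  have hCH : A * A = (-Matrix.det A) • (1 : Matrix (Fin 2) (Fin 2) ℝ) := by
    have h11 : A 1 1 = -A 0 0 := by
      have := Matrix.trace_fin_two A
      rw [htrA] at this; linarith [this.symm.le]
    ext i j
    fin_cases i <;> fin_cases j <;>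
      simp [Matrix.mul_apply, Fin.sum_univ_two, Matrix.det_fin_two, Matrix.one_apply, h11] <;>
      ring
  have hff : f ∘ₗ f = (-Matrix.det A) • (LinearMap.id : W →ₗ[ℝ] W) := by
    apply (LinearMap.toMatrix b b).injective
    rw [LinearMap.toMatrix_comp b b b, _root_.map_smul, LinearMap.toMatrix_id, ← hA]
    exact hCH
  -- a nonzero element of W
  have hnt : Nontrivial W := by
    apply Module.nontrivial_of_finrank_pos (R := ℝ)
    rw [hrank]; norm_num
  obtain ⟨x, hx0⟩ := exists_ne (0 : W)
  -- the vector x is killed by L² + (det A)·1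
  set d := Matrix.det A with hd
  have hfx : f (f x) = -(d • x) := by
    have := LinearMap.congr_fun hff x
    simpa using this
  have hx4 : (LmatE s t * LmatE s t + d • (1 : Matrix (Fin 4) (Fin 4) ℝ)).mulVec
      (x : Fin 4 → ℝ) = 0 := by
    have hcoe : ((f (f x) : W) : Fin 4 → ℝ)
        = (LmatE s t * LmatE s t).mulVec (x : Fin 4 → ℝ) := by
      rw [hfdef, LinearMap.restrict_coe_apply, LinearMap.restrict_coe_apply,
        Matrix.toLin'_apply, Matrix.toLin'_apply, Matrix.mulVec_mulVec]
    have hcoe2 : ((f (f x) : W) : Fin 4 → ℝ) = -(d • (x : Fin 4 → ℝ)) := by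
      rw [hfx]; rfl
    rw [Matrix.add_mulVec, Matrix.smul_mulVec, Matrix.one_mulVec, ← hcoe, hcoe2]
    simp
  -- but L² + d·1 is invertible
  have hexp : LmatE s t * LmatE s t + d • (1 : Matrix (Fin 4) (Fin 4) ℝ)
      = !![d + t^2 - s^2, 0, 0, 2*s*t;
           0, d + t^2 - s^2, -(2*s*t), 0;
           0, 2*s*t, d + t^2 - s^2, 0;
           -(2*s*t), 0, 0, d + t^2 - s^2] := by
    rw [LmatE]; exact LmatE_sq_aux s t d
  have hdetpos : 0 < ((d + t^2 - s^2)^2 + (2*s*t)^2)^2 := by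
    have h2st : 2*s*t ≠ 0 := by positivity
    positivity
  have hdet : (LmatE s t * LmatE s t + d • (1 : Matrix (Fin 4) (Fin 4) ℝ)).det
      = ((d + t^2 - s^2)^2 + (2*s*t)^2)^2 := by
    rw [hexp, det4_aux]
  have hunit : IsUnit (LmatE s t * LmatE s t + d • (1 : Matrix (Fin 4) (Fin 4) ℝ)) := by
    rw [Matrix.isUnit_iff_isUnit_det, hdet]
    exact (hdetpos.ne').isUnit
  have hinj := Matrix.mulVec_injective_iff_isUnit.mpr hunit
  have : (x : Fin 4 → ℝ) = 0 := by
    apply hinj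
    rw [hx4, Matrix.mulVec_zero]
  exact hx0 (Subtype.coe_injective (by simpa using this))
end
end

section
/- Let s, t ∈ ℝ with s ≠ 0 and t ≠ 0, and let W ⊆ ℝ⁴ be a 2-dimensional linear subspace with L^H_{s,t}·W ⊆ W whose induced action is unimodular (the trace of the restriction of L^H_{s,t} to W equals 0). Then the form ω restricted to W is nonzero: there exist u, v ∈ W with ω(u,v) ≠ 0 (equivalently, the subalgebra of heis₅ determined by W together with the center is isomorphic to heis₃, rather than abelian). -/
open Matrix

noncomputable section

/-- The derivation `L^H_{s,t}` by which an element of `ℝ × SO°(1,1)` acts on the Heisenberg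
algebra `heis₅` modulo its center, for the hyperbolic oscillator geometry. -/
def LmatH (s t : ℝ) : Matrix (Fin 4) (Fin 4) ℝ :=
  !![0, t, -s, 0; t, 0, 0, s; -s, 0, 0, -t; 0, s, -t, 0]

/-- The alternating bilinear form `ω` on `ℝ⁴ ≅ heis₅/z` with `ω(e₁,e₃) = ω(e₂,e₄) = 1`
(all other pairings of basis vectors zero), encoding the Lie bracket of `heis₅` in a
symplectic basis. -/
def omegaForm (u v : Fin 4 → ℝ) : ℝ :=
  u 0 * v 2 - u 2 * v 0 + u 1 * v 3 - u 3 * v 1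

theorem aux_heis (s t : ℝ) (hs : s ≠ 0) (ht : t ≠ 0) (u v : Fin 4 → ℝ) (a b c : ℝ)
    (hu : Matrix.toLin' (LmatH s t) u = a • u + b • v)
    (hv : Matrix.toLin' (LmatH s t) v = c • u + (-a) • v)
    (hom : omegaForm u v = 0)
    (hind : LinearIndependent ℝ ![u, v]) : False := by
  have hu0 : t * u 1 - s * u 2 = a * u 0 + b * v 0 := by
    have h := congrFun hu 0
    simp [LmatH, Matrix.toLin'_apply, Matrix.mulVec, dotProduct, Fin.sum_univ_four] at h
    linarith [h]
  have hu1 : t * u 0 + s * u 3 = a * u 1 + b * v 1 := by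
    have h := congrFun hu 1
    simp [LmatH, Matrix.toLin'_apply, Matrix.mulVec, dotProduct, Fin.sum_univ_four] at h
    linarith [h]
  have hu2 : -(s * u 0) - t * u 3 = a * u 2 + b * v 2 := by
    have h := congrFun hu 2
    simp [LmatH, Matrix.toLin'_apply, Matrix.mulVec, dotProduct, Fin.sum_univ_four] at h
    linarith [h]
  have hu3 : s * u 1 - t * u 2 = a * u 3 + b * v 3 := by
    have h := congrFun hu 3
    simp [LmatH, Matrix.toLin'_apply, Matrix.mulVec, dotProduct, Fin.sum_univ_four] at h
    linarith [h]
  have hv0 : t * v 1 - s * v 2 = c * u 0 + (-a) * v 0 := by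
    have h := congrFun hv 0
    simp [LmatH, Matrix.toLin'_apply, Matrix.mulVec, dotProduct, Fin.sum_univ_four] at h
    linarith [h]
  have hv1 : t * v 0 + s * v 3 = c * u 1 + (-a) * v 1 := by
    have h := congrFun hv 1
    simp [LmatH, Matrix.toLin'_apply, Matrix.mulVec, dotProduct, Fin.sum_univ_four] at h
    linarith [h]
  have hv2 : -(s * v 0) - t * v 3 = c * u 2 + (-a) * v 2 := by
    have h := congrFun hv 2
    simp [LmatH, Matrix.toLin'_apply, Matrix.mulVec, dotProduct, Fin.sum_univ_four] at h
    linarith [h]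
  have hv3 : s * v 1 - t * v 2 = c * u 3 + (-a) * v 3 := by
    have h := congrFun hv 3
    simp [LmatH, Matrix.toLin'_apply, Matrix.mulVec, dotProduct, Fin.sum_univ_four] at h
    linarith [h]
  have hA1 : (s + t - a) * (u 0 + u 1 - u 2 + u 3) = b * (v 0 + v 1 - v 2 + v 3) := by linear_combination hu0 + hu1 - hu2 + hu3
  have hA2 : (s + t + a) * (u 0 - u 1 + u 2 + u 3) = -(b * (v 0 - v 1 + v 2 + v 3)) := by linear_combination -hu0 + hu1 - hu2 - hu3
  have hA3 : (t - s - a) * (u 0 + u 1 + u 2 - u 3) = b * (v 0 + v 1 + v 2 - v 3) := by linear_combination hu0 + hu1 + hu2 - hu3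
  have hA4 : (s - t - a) * (u 0 - u 1 - u 2 - u 3) = b * (v 0 - v 1 - v 2 - v 3) := by linear_combination hu0 - hu1 - hu2 - hu3
  have hB1 : (s + t + a) * (v 0 + v 1 - v 2 + v 3) = c * (u 0 + u 1 - u 2 + u 3) := by linear_combination hv0 + hv1 - hv2 + hv3
  have hB2 : (s + t - a) * (v 0 - v 1 + v 2 + v 3) = -(c * (u 0 - u 1 + u 2 + u 3)) := by linear_combination -hv0 + hv1 - hv2 - hv3
  have hB3 : (t - s + a) * (v 0 + v 1 + v 2 - v 3) = c * (u 0 + u 1 + u 2 - u 3) := by linear_combination hv0 + hv1 + hv2 - hv3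
  have hB4 : (s - t + a) * (v 0 - v 1 - v 2 - v 3) = c * (u 0 - u 1 - u 2 - u 3) := by linear_combination hv0 - hv1 - hv2 - hv3
  have h4st : (4:ℝ) * s * t ≠ 0 := mul_ne_zero (mul_ne_zero four_ne_zero hs) ht
  have hP13 : (u 0 + u 1 - u 2 + u 3) * (v 0 + v 1 + v 2 - v 3) = 0 := by
    have h : (4:ℝ) * s * t * ((u 0 + u 1 - u 2 + u 3) * (v 0 + v 1 + v 2 - v 3)) = 0 := by
      linear_combination (s + t + a) * (v 0 + v 1 + v 2 - v 3) * hA1  - ((s + t + a) * (v 0 + v 1 - v 2 + v 3)) * hA3 + (s - t + a) * (u 0 + u 1 - u 2 + u 3) * hB3  - ((s - t + a) * (u 0 + u 1 + u 2 - u 3)) * hB1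
    exact (mul_eq_zero.mp h).resolve_left h4st
  have hQ13 : (u 0 + u 1 + u 2 - u 3) * (v 0 + v 1 - v 2 + v 3) = 0 := by
    have h : (4:ℝ) * s * t * ((u 0 + u 1 + u 2 - u 3) * (v 0 + v 1 - v 2 + v 3)) = 0 := by
      linear_combination (-s + t + a) * (v 0 + v 1 + v 2 - v 3) * hA1  - ((-s + t + a) * (v 0 + v 1 - v 2 + v 3)) * hA3 + (-s - t + a) * (u 0 + u 1 - u 2 + u 3) * hB3  - ((-s - t + a) * (u 0 + u 1 + u 2 - u 3)) * hB1
    exact (mul_eq_zero.mp h).resolve_left h4st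
  have hP14 : (u 0 + u 1 - u 2 + u 3) * (v 0 - v 1 - v 2 - v 3) = 0 := by
    have h : (4:ℝ) * s * t * ((u 0 + u 1 - u 2 + u 3) * (v 0 - v 1 - v 2 - v 3)) = 0 := by
      linear_combination (s + t + a) * (v 0 - v 1 - v 2 - v 3) * hA1  - ((s + t + a) * (v 0 + v 1 - v 2 + v 3)) * hA4 + (-s + t + a) * (u 0 + u 1 - u 2 + u 3) * hB4  - ((-s + t + a) * (u 0 - u 1 - u 2 - u 3)) * hB1
    exact (mul_eq_zero.mp h).resolve_left h4st
  have hQ14 : (u 0 - u 1 - u 2 - u 3) * (v 0 + v 1 - v 2 + v 3) = 0 := by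
    have h : (4:ℝ) * s * t * ((u 0 - u 1 - u 2 - u 3) * (v 0 + v 1 - v 2 + v 3)) = 0 := by
      linear_combination (s - t + a) * (v 0 - v 1 - v 2 - v 3) * hA1  - ((s - t + a) * (v 0 + v 1 - v 2 + v 3)) * hA4 + (-s - t + a) * (u 0 + u 1 - u 2 + u 3) * hB4  - ((-s - t + a) * (u 0 - u 1 - u 2 - u 3)) * hB1
    exact (mul_eq_zero.mp h).resolve_left h4st
  have hP23 : (u 0 - u 1 + u 2 + u 3) * (v 0 + v 1 + v 2 - v 3) = 0 := by
    have h : (4:ℝ) * s * t * ((u 0 - u 1 + u 2 + u 3) * (v 0 + v 1 + v 2 - v 3)) = 0 := by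
      linear_combination (s + t - a) * (v 0 + v 1 + v 2 - v 3) * hA2 + (s + t - a) * (v 0 - v 1 + v 2 + v 3) * hA3 + (s - t + a) * (u 0 - u 1 + u 2 + u 3) * hB3 + (s - t + a) * (u 0 + u 1 + u 2 - u 3) * hB2
    exact (mul_eq_zero.mp h).resolve_left h4st
  have hQ23 : (u 0 + u 1 + u 2 - u 3) * (v 0 - v 1 + v 2 + v 3) = 0 := by
    have h : (4:ℝ) * s * t * ((u 0 + u 1 + u 2 - u 3) * (v 0 - v 1 + v 2 + v 3)) = 0 := by
      linear_combination (s - t - a) * (v 0 + v 1 + v 2 - v 3) * hA2 + (s - t - a) * (v 0 - v 1 + v 2 + v 3) * hA3 + (s + t + a) * (u 0 - u 1 + u 2 + u 3) * hB3 + (s + t + a) * (u 0 + u 1 + u 2 - u 3) * hB2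
    exact (mul_eq_zero.mp h).resolve_left h4st
  have hP24 : (u 0 - u 1 + u 2 + u 3) * (v 0 - v 1 - v 2 - v 3) = 0 := by
    have h : (4:ℝ) * s * t * ((u 0 - u 1 + u 2 + u 3) * (v 0 - v 1 - v 2 - v 3)) = 0 := by
      linear_combination (s + t - a) * (v 0 - v 1 - v 2 - v 3) * hA2 + (s + t - a) * (v 0 - v 1 + v 2 + v 3) * hA4 + (-s + t + a) * (u 0 - u 1 + u 2 + u 3) * hB4 + (-s + t + a) * (u 0 - u 1 - u 2 - u 3) * hB2
    exact (mul_eq_zero.mp h).resolve_left h4st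
  have hQ24 : (u 0 - u 1 - u 2 - u 3) * (v 0 - v 1 + v 2 + v 3) = 0 := by
    have h : (4:ℝ) * s * t * ((u 0 - u 1 - u 2 - u 3) * (v 0 - v 1 + v 2 + v 3)) = 0 := by
      linear_combination (-s + t - a) * (v 0 - v 1 - v 2 - v 3) * hA2 + (-s + t - a) * (v 0 - v 1 + v 2 + v 3) * hA4 + (s + t + a) * (u 0 - u 1 + u 2 + u 3) * hB4 + (s + t + a) * (u 0 - u 1 - u 2 - u 3) * hB2
    exact (mul_eq_zero.mp h).resolve_left h4st
  have hM : ((u 0 + u 1 - u 2 + u 3) * (v 0 - v 1 + v 2 + v 3) - (u 0 - u 1 + u 2 + u 3) * (v 0 + v 1 - v 2 + v 3)) - ((u 0 + u 1 + u 2 - u 3) * (v 0 - v 1 - v 2 - v 3) - (u 0 - u 1 - u 2 - u 3) * (v 0 + v 1 + v 2 - v 3)) = 0 := by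
    have h : u 0 * v 2 - u 2 * v 0 + u 1 * v 3 - u 3 * v 1 = 0 := hom
    linear_combination 4 * h
  have hm12 : (u 0 + u 1 - u 2 + u 3) * (v 0 - v 1 + v 2 + v 3) - (u 0 - u 1 + u 2 + u 3) * (v 0 + v 1 - v 2 + v 3) = 0 := by
    by_cases h1 : (u 0 + u 1 - u 2 + u 3) = 0
    · by_cases h2 : (u 0 - u 1 + u 2 + u 3) = 0
      · by_cases h3 : (v 0 + v 1 - v 2 + v 3) = 0
        · by_cases h4 : (v 0 - v 1 + v 2 + v 3) = 0
          · rw [h1, h2, h3, h4]; ring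
          · have e3 : (u 0 + u 1 + u 2 - u 3) = 0 := by
              rcases mul_eq_zero.mp hQ23 with h | h
              · exact h
              · exact absurd h h4
            have e4 : (u 0 - u 1 - u 2 - u 3) = 0 := by
              rcases mul_eq_zero.mp hQ24 with h | h
              · exact h
              · exact absurd h h4
            linear_combination hM + (v 0 - v 1 - v 2 - v 3) * e3 - (v 0 + v 1 + v 2 - v 3) * e4
        · have e3 : (u 0 + u 1 + u 2 - u 3) = 0 := by
            rcases mul_eq_zero.mp hQ13 with h | h
            · exact h
            · exact absurd h h3
          have e4 : (u 0 - u 1 - u 2 - u 3) = 0 := by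
            rcases mul_eq_zero.mp hQ14 with h | h
            · exact h
            · exact absurd h h3
          linear_combination hM + (v 0 - v 1 - v 2 - v 3) * e3 - (v 0 + v 1 + v 2 - v 3) * e4
      · have e3 : (v 0 + v 1 + v 2 - v 3) = 0 := by
          rcases mul_eq_zero.mp hP23 with h | h
          · exact absurd h h2
          · exact h
        have e4 : (v 0 - v 1 - v 2 - v 3) = 0 := by
          rcases mul_eq_zero.mp hP24 with h | h
          · exact absurd h h2
          · exact h
        linear_combination hM - (u 0 - u 1 - u 2 - u 3) * e3 + (u 0 + u 1 + u 2 - u 3) * e4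
    · have e3 : (v 0 + v 1 + v 2 - v 3) = 0 := by
        rcases mul_eq_zero.mp hP13 with h | h
        · exact absurd h h1
        · exact h
      have e4 : (v 0 - v 1 - v 2 - v 3) = 0 := by
        rcases mul_eq_zero.mp hP14 with h | h
        · exact absurd h h1
        · exact h
      linear_combination hM - (u 0 - u 1 - u 2 - u 3) * e3 + (u 0 + u 1 + u 2 - u 3) * e4
  have hm34 : (u 0 + u 1 + u 2 - u 3) * (v 0 - v 1 - v 2 - v 3) - (u 0 - u 1 - u 2 - u 3) * (v 0 + v 1 + v 2 - v 3) = 0 := by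
    linear_combination hm12 - hM
  have hd01 : u 0 * v 1 - u 1 * v 0 = 0 := by linear_combination (-1/8) * hP14 + (1/8) * hQ14 + (1/8) * hP23 + (-1/8) * hQ23 + (-1/8) * hm12 + (-1/8) * hm34
  have hd02 : u 0 * v 2 - u 2 * v 0 = 0 := by linear_combination (1/8) * hP13 + (-1/8) * hQ13 + (-1/8) * hP24 + (1/8) * hQ24 + (1/8) * hm12 + (-1/8) * hm34
  have hd03 : u 0 * v 3 - u 3 * v 0 = 0 := by linear_combination (-1/8) * hP13 + (1/8) * hQ13 + (-1/8) * hP14 + (1/8) * hQ14 + (-1/8) * hP23 + (1/8) * hQ23 + (-1/8) * hP24 + (1/8) * hQ24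
  have hd12 : u 1 * v 2 - u 2 * v 1 = 0 := by linear_combination (1/8) * hP13 + (-1/8) * hQ13 + (-1/8) * hP14 + (1/8) * hQ14 + (-1/8) * hP23 + (1/8) * hQ23 + (1/8) * hP24 + (-1/8) * hQ24
  have hd13 : u 1 * v 3 - u 3 * v 1 = 0 := by linear_combination (-1/8) * hP13 + (1/8) * hQ13 + (1/8) * hP24 + (-1/8) * hQ24 + (1/8) * hm12 + (-1/8) * hm34
  have hd23 : u 2 * v 3 - u 3 * v 2 = 0 := by linear_combination (1/8) * hP14 + (-1/8) * hQ14 + (-1/8) * hP23 + (1/8) * hQ23 + (-1/8) * hm12 + (-1/8) * hm34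
  by_cases hv4 : v = 0
  · exact hind.ne_zero 1 (by simp [hv4])
  · obtain ⟨i, hi⟩ := Function.ne_iff.mp hv4
    simp only [Pi.zero_apply] at hi
    have hcomb : v i • u + (-(u i)) • v = 0 := by
      funext j
      simp only [Pi.add_apply, Pi.smul_apply, smul_eq_mul, Pi.zero_apply]
      fin_cases i <;> fin_cases j <;> simp only [Fin.zero_eta, Fin.mk_one, Fin.reduceFinMk] <;>
        first
          | ring1
          | linear_combination hd01 | linear_combination -hd01
          | linear_combination hd02 | linear_combination -hd02
          | linear_combination hd03 | linear_combination -hd03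
          | linear_combination hd12 | linear_combination -hd12
          | linear_combination hd13 | linear_combination -hd13
          | linear_combination hd23 | linear_combination -hd23
    have := (LinearIndependent.pair_iff.mp hind (v i) (-(u i)) hcomb).1
    exact hi this

/-- If `s ≠ 0`, `t ≠ 0` and `W ⊆ ℝ⁴` is a `2`-dimensional subspace invariant under
`L^H_{s,t}` on which the induced action is unimodular, then `ω` restricted to `W` is
nonzero; i.e. the subalgebra of `heis₅` determined by `W` together with the center is
isomorphic to `heis₃` rather than abelian. -/
theorem invariant_unimodular_plane_heis3 (s t : ℝ) (hs : s ≠ 0) (ht : t ≠ 0)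
    (W : Submodule ℝ (Fin 4 → ℝ))
    (hdim : Module.finrank ℝ W = 2)
    (hW : ∀ x ∈ W, Matrix.toLin' (LmatH s t) x ∈ W)
    (htr : LinearMap.trace ℝ W ((Matrix.toLin' (LmatH s t)).restrict hW) = 0) :
    ∃ u ∈ W, ∃ v ∈ W, omegaForm u v ≠ 0 := by
  by_contra hcon
  push_neg at hcon
  have B := Module.finBasisOfFinrankEq ℝ W hdim
  set f := (Matrix.toLin' (LmatH s t)).restrict hW with hf
  set M := LinearMap.toMatrix B B f with hM
  have htrM : M 0 0 + M 1 1 = 0 := by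
    rw [LinearMap.trace_eq_matrix_trace ℝ B f, ← hM, Matrix.trace_fin_two] at htr
    exact htr
  have hrep : ∀ j, f (B j) = M 0 j • B 0 + M 1 j • B 1 := by
    intro j
    have hsum := B.sum_repr (f (B j))
    rw [Fin.sum_univ_two] at hsum
    rw [← hsum, hM, LinearMap.toMatrix_apply, LinearMap.toMatrix_apply]
  have hu : Matrix.toLin' (LmatH s t) (B 0 : Fin 4 → ℝ)
      = M 0 0 • (B 0 : Fin 4 → ℝ) + M 1 0 • (B 1 : Fin 4 → ℝ) := by
    have h := congrArg (Subtype.val) (hrep 0)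
    simpa [hf, LinearMap.restrict_coe_apply] using h
  have hv : Matrix.toLin' (LmatH s t) (B 1 : Fin 4 → ℝ)
      = M 0 1 • (B 0 : Fin 4 → ℝ) + (-(M 0 0)) • (B 1 : Fin 4 → ℝ) := by
    have h := congrArg (Subtype.val) (hrep 1)
    have h11 : M 1 1 = -(M 0 0) := by linarith
    rw [h11] at h
    simpa [hf, LinearMap.restrict_coe_apply] using h
  have hli : LinearIndependent ℝ ![(B 0 : Fin 4 → ℝ), (B 1 : Fin 4 → ℝ)] := by
    have h1 := B.linearIndependent.map' W.subtype W.ker_subtype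
    have h2 : ![(B 0 : Fin 4 → ℝ), (B 1 : Fin 4 → ℝ)] = W.subtype ∘ B := by
      funext i; fin_cases i <;> rfl
    rwa [h2]
  exact aux_heis s t hs ht _ _ (M 0 0) (M 1 0) (M 0 1) hu hv
    (hcon _ (B 0).2 _ (B 1).2) hli
end
end

section
/- For all real numbers s, t, the characteristic polynomial of L^H_{s,t} equals (X² − (s+t)²)(X² − (s−t)²); in particular its eigenvalues are −s−t, −s+t, s−t and s+t (for s = 1 these are −1−t, −1+t, 1−t, 1+t). -/
open Matrix Polynomial

/-- The characteristic polynomial of `L^H_{s,t}` is `(X² − (s+t)²)(X² − (s−t)²)`;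
in particular its eigenvalues (the roots of the characteristic polynomial, with
multiplicity) are `−s−t, −s+t, s−t, s+t`. -/
theorem LmatH_charpoly (s t : ℝ) :
    (LmatH s t).charpoly = (X ^ 2 - C ((s + t) ^ 2)) * (X ^ 2 - C ((s - t) ^ 2)) ∧
    (LmatH s t).charpoly.roots = {-s - t, -s + t, s - t, s + t} := by
  have h : (LmatH s t).charpoly = (X ^ 2 - C ((s + t) ^ 2)) * (X ^ 2 - C ((s - t) ^ 2)) := by
    rw [Matrix.charpoly]
    have e1 : (1 : Fin 4).succAbove (2 : Fin 3) = 3 := rfl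
    have e2 : (2 : Fin 4).succAbove (2 : Fin 3) = 3 := rfl
    simp [charmatrix_apply, LmatH, Matrix.det_succ_row_zero, Fin.sum_univ_succ,
      Matrix.diagonal_apply, e1, e2]
    ring
  refine ⟨h, ?_⟩
  have h2 : (LmatH s t).charpoly =
      (({-s - t, -s + t, s - t, s + t} : Multiset ℝ).map fun a => X - C a).prod := by
    rw [h]
    simp only [Multiset.insert_eq_cons, Multiset.map_cons, Multiset.map_singleton,
      Multiset.prod_cons, Multiset.prod_singleton, map_pow, map_add, map_sub, map_neg]
    ring
  rw [h2, Polynomial.roots_multiset_prod_X_sub_C]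
end

section
/- Every abelian subgroup Γ of Heis₅ that is discrete in the induced topology is a free abelian group of rank at most 3, i.e., Γ is isomorphic to ℤᵏ for some k ≤ 3. -/
set_option maxHeartbeats 1000000
set_option synthInstance.maxHeartbeats 400000

open Matrix

noncomputable section

/-- The 5-dimensional Heisenberg group `Heis₅`, realized as the set of real `4 × 4`
matrices `[[1,a,b,z],[0,1,0,c],[0,0,1,d],[0,0,0,1]]` inside `GL₄(ℝ)` (whose topology is
induced from the space of `4 × 4` real matrices). -/
def Heis5Set : Set (Matrix.GeneralLinearGroup (Fin 4) ℝ) :=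
  {g | ∃ a b c d z : ℝ,
    (g : Matrix (Fin 4) (Fin 4) ℝ) = !![1, a, b, z; 0, 1, 0, c; 0, 0, 1, d; 0, 0, 0, 1]}

namespace Heis5Aux

def mat (a b c d z : ℝ) : Matrix (Fin 4) (Fin 4) ℝ :=
  !![1, a, b, z; 0, 1, 0, c; 0, 0, 1, d; 0, 0, 0, 1]

lemma mat_mul (a b c d z a' b' c' d' z' : ℝ) :
    mat a b c d z * mat a' b' c' d' z' =
      mat (a+a') (b+b') (c+c') (d+d') (z+z'+a*c'+b*d') := by
  ext i j
  fin_cases i <;> fin_cases j <;>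
    simp [mat, Matrix.mul_apply, Fin.sum_univ_four, Matrix.vecHead, Matrix.vecTail] <;> ring

lemma mat_one : mat 0 0 0 0 0 = 1 := by
  ext i j
  fin_cases i <;> fin_cases j <;> simp [mat, Matrix.one_apply, Matrix.vecHead, Matrix.vecTail]

lemma mat_entry01 (a b c d z : ℝ) : mat a b c d z 0 1 = a := by simp [mat]
lemma mat_entry02 (a b c d z : ℝ) : mat a b c d z 0 2 = b := by simp [mat]
lemma mat_entry13 (a b c d z : ℝ) : mat a b c d z 1 3 = c := by simp [mat]
lemma mat_entry23 (a b c d z : ℝ) : mat a b c d z 2 3 = d := by simp [mat]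
lemma mat_entry03 (a b c d z : ℝ) : mat a b c d z 0 3 = z := by simp [mat]

lemma mat_inj {a b c d z a' b' c' d' z' : ℝ} (h : mat a b c d z = mat a' b' c' d' z') :
    a = a' ∧ b = b' ∧ c = c' ∧ d = d' ∧ z = z' := by
  refine ⟨?_, ?_, ?_, ?_, ?_⟩
  · have := congrFun (congrFun h 0) 1; rwa [mat_entry01, mat_entry01] at this
  · have := congrFun (congrFun h 0) 2; rwa [mat_entry02, mat_entry02] at this
  · have := congrFun (congrFun h 1) 3; rwa [mat_entry13, mat_entry13] at this
  · have := congrFun (congrFun h 2) 3; rwa [mat_entry23, mat_entry23] at this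
  · have := congrFun (congrFun h 0) 3; rwa [mat_entry03, mat_entry03] at this

def matUnit (a b c d z : ℝ) : GL (Fin 4) ℝ where
  val := mat a b c d z
  inv := mat (-a) (-b) (-c) (-d) (-z + a*c + b*d)
  val_inv := by
    rw [mat_mul]
    rw [show a + -a = 0 by ring, show b + -b = 0 by ring, show c + -c = 0 by ring,
      show d + -d = 0 by ring, show z + (-z + a*c + b*d) + a * -c + b * -d = 0 by ring, mat_one]
  inv_val := by
    rw [mat_mul]
    rw [show -a + a = 0 by ring, show -b + b = 0 by ring, show -c + c = 0 by ring,
      show -d + d = 0 by ring, show -z + a*c + b*d + z + -a * c + -b * d = 0 by ring, mat_one]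

@[simp] lemma matUnit_val (a b c d z : ℝ) :
    (matUnit a b c d z : Matrix (Fin 4) (Fin 4) ℝ) = mat a b c d z := rfl

def toGL (v : Fin 5 → ℝ) : GL (Fin 4) ℝ :=
  matUnit (v 0) (v 1) (v 2) (v 3) (v 4 + (v 0 * v 2 + v 1 * v 3) / 2)

def coords (g : GL (Fin 4) ℝ) : Fin 5 → ℝ :=
  ![(g : Matrix (Fin 4) (Fin 4) ℝ) 0 1, (g : Matrix (Fin 4) (Fin 4) ℝ) 0 2,
    (g : Matrix (Fin 4) (Fin 4) ℝ) 1 3, (g : Matrix (Fin 4) (Fin 4) ℝ) 2 3,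
    (g : Matrix (Fin 4) (Fin 4) ℝ) 0 3 -
      ((g : Matrix (Fin 4) (Fin 4) ℝ) 0 1 * (g : Matrix (Fin 4) (Fin 4) ℝ) 1 3 +
        (g : Matrix (Fin 4) (Fin 4) ℝ) 0 2 * (g : Matrix (Fin 4) (Fin 4) ℝ) 2 3) / 2]

lemma coords_toGL (v : Fin 5 → ℝ) : coords (toGL v) = v := by
  funext i
  fin_cases i <;>
    simp [coords, toGL, mat_entry01, mat_entry02, mat_entry13, mat_entry23, mat_entry03] <;> ring

lemma toGL_injective : Function.Injective toGL := by
  intro v w h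
  have := congrArg coords h
  rwa [coords_toGL, coords_toGL] at this

lemma coords_eq (g : GL (Fin 4) ℝ) {a b c d z : ℝ}
    (h : (g : Matrix (Fin 4) (Fin 4) ℝ) = mat a b c d z) :
    coords g = ![a, b, c, d, z - (a*c + b*d)/2] := by
  funext i
  fin_cases i <;> simp [coords, h, mat_entry01, mat_entry02, mat_entry13, mat_entry23, mat_entry03]

lemma toGL_of_mat (g : GL (Fin 4) ℝ) {a b c d z : ℝ}
    (h : (g : Matrix (Fin 4) (Fin 4) ℝ) = mat a b c d z) : toGL (coords g) = g := by
  refine Units.ext ?_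
  show mat _ _ _ _ _ = (g : Matrix (Fin 4) (Fin 4) ℝ)
  rw [h, coords_eq g h]
  ext i j
  fin_cases i <;> fin_cases j <;> simp [mat, Matrix.vecHead, Matrix.vecTail] <;> ring

lemma continuous_toGL : Continuous toGL := by
  rw [Units.continuous_iff]
  constructor
  · refine continuous_pi fun i => continuous_pi fun j => ?_
    fin_cases i <;> fin_cases j <;>
      simp [toGL, mat, Matrix.vecHead, Matrix.vecTail] <;> fun_prop
  · refine continuous_pi fun i => continuous_pi fun j => ?_
    fin_cases i <;> fin_cases j <;>
      simp [toGL, matUnit, mat, Matrix.vecHead, Matrix.vecTail] <;> fun_prop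

lemma coords_one : coords (1 : GL (Fin 4) ℝ) = 0 := by
  have h : ((1 : GL (Fin 4) ℝ) : Matrix (Fin 4) (Fin 4) ℝ) = mat 0 0 0 0 0 := by
    rw [mat_one]; rfl
  rw [coords_eq 1 h]
  funext i
  fin_cases i <;> simp

lemma comm_symplectic {x y : GL (Fin 4) ℝ} {a b c d z a' b' c' d' z' : ℝ}
    (hx : (x : Matrix (Fin 4) (Fin 4) ℝ) = mat a b c d z)
    (hy : (y : Matrix (Fin 4) (Fin 4) ℝ) = mat a' b' c' d' z')
    (hcomm : x * y = y * x) :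
    a * c' + b * d' = a' * c + b' * d := by
  have h : mat a b c d z * mat a' b' c' d' z' = mat a' b' c' d' z' * mat a b c d z := by
    rw [← hx, ← hy, ← Units.val_mul, ← Units.val_mul, hcomm]
  rw [mat_mul, mat_mul] at h
  have := (mat_inj h).2.2.2.2
  linarith

lemma coords_mul {x y : GL (Fin 4) ℝ} {a b c d z a' b' c' d' z' : ℝ}
    (hx : (x : Matrix (Fin 4) (Fin 4) ℝ) = mat a b c d z)
    (hy : (y : Matrix (Fin 4) (Fin 4) ℝ) = mat a' b' c' d' z')
    (hcomm : x * y = y * x) :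
    coords (x * y) = coords x + coords y := by
  have hsym := comm_symplectic hx hy hcomm
  have hxy : ((x * y : GL (Fin 4) ℝ) : Matrix (Fin 4) (Fin 4) ℝ) =
      mat (a+a') (b+b') (c+c') (d+d') (z+z'+a*c'+b*d') := by
    rw [Units.val_mul, hx, hy, mat_mul]
  rw [coords_eq _ hxy, coords_eq _ hx, coords_eq _ hy]
  funext i
  fin_cases i <;> simp <;> linarith

lemma coords_inv {x : GL (Fin 4) ℝ} {a b c d z : ℝ}
    (hx : (x : Matrix (Fin 4) (Fin 4) ℝ) = mat a b c d z) :
    coords x⁻¹ = - coords x := by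
  have hxu : x = matUnit a b c d z := Units.ext hx
  have hinv : ((x⁻¹ : GL (Fin 4) ℝ) : Matrix (Fin 4) (Fin 4) ℝ) =
      mat (-a) (-b) (-c) (-d) (-z + a*c + b*d) := by
    rw [hxu]; rfl
  rw [coords_eq _ hinv, coords_eq _ hx]
  funext i
  fin_cases i <;> simp <;> ring

open Module Submodule

/-- The standard symplectic form on `Fin 4 → ℝ`. -/
def B : LinearMap.BilinForm ℝ (Fin 4 → ℝ) :=
  LinearMap.mk₂ ℝ (fun u w => u 0 * w 2 + u 1 * w 3 - u 2 * w 0 - u 3 * w 1)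
    (by intros; simp; ring) (by intros; simp; ring)
    (by intros; simp; ring) (by intros; simp; ring)

lemma B_apply (u w : Fin 4 → ℝ) : B u w = u 0 * w 2 + u 1 * w 3 - u 2 * w 0 - u 3 * w 1 := rfl

lemma B_refl : B.IsRefl := by
  intro u w h
  rw [B_apply] at h ⊢
  linarith

lemma B_nondegenerate : B.Nondegenerate := by
  have hL : LinearMap.SeparatingLeft B := by
    intro v h
    funext i
    have h0 := h (Pi.single 2 1)
    have h1 := h (Pi.single 3 1)
    have h2 := h (Pi.single 0 1)
    have h3 := h (Pi.single 1 1)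
    rw [B_apply] at h0 h1 h2 h3
    simp [Pi.single_apply] at h0 h1 h2 h3
    fin_cases i <;> simp [h0, h1, h2, h3]
  exact ⟨hL, fun v h => hL v (fun w => B_refl _ _ (h w))⟩

lemma finrank_isotropic_le (W : Submodule ℝ (Fin 4 → ℝ)) (h : W ≤ B.orthogonal W) :
    finrank ℝ W ≤ 2 := by
  have := LinearMap.BilinForm.finrank_add_finrank_orthogonal B_refl W
  rw [LinearMap.BilinForm.orthogonal_top_eq_bot B_nondegenerate, inf_bot_eq, finrank_bot, add_zero] at this
  have h2 : finrank ℝ W ≤ finrank ℝ (B.orthogonal W) := Submodule.finrank_mono h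
  have h4 : finrank ℝ (Fin 4 → ℝ) = 4 := by simp
  omega

/-- Projection from `Fin 5 → ℝ` to the first four coordinates. -/
def p : (Fin 5 → ℝ) →ₗ[ℝ] (Fin 4 → ℝ) :=
  LinearMap.funLeft ℝ ℝ (Fin.castSucc)

lemma p_apply (v : Fin 5 → ℝ) (i : Fin 4) : p v i = v (Fin.castSucc i) := rfl

lemma finrank_span_le_three (S : Set (Fin 5 → ℝ))
    (hiso : ∀ u ∈ S, ∀ w ∈ S, B (p u) (p w) = 0) :
    finrank ℝ (span ℝ S) ≤ 3 := by
  set V : Submodule ℝ (Fin 5 → ℝ) := span ℝ S with hV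
  set r : V →ₗ[ℝ] (Fin 4 → ℝ) := p.comp V.subtype with hr
  have hrank := LinearMap.finrank_range_add_finrank_ker r
  have hrange : LinearMap.range r = span ℝ (p '' S) := by
    rw [hr, LinearMap.range_comp, Submodule.range_subtype, hV, ← Submodule.map_span]
  have hiso' : ∀ u ∈ span ℝ (p '' S), ∀ w ∈ span ℝ (p '' S), B u w = 0 := by
    have hsub : span ℝ (p '' S) ≤ B.orthogonal (span ℝ (p '' S)) := by
      rw [Submodule.span_le]
      rintro _ ⟨u, hu, rfl⟩
      intro w hw
      induction hw using Submodule.span_induction with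
      | mem x hx =>
        obtain ⟨x', hx', rfl⟩ := hx
        exact hiso x' hx' u hu
      | zero => exact B.isOrtho_zero_left _
      | add x y _ _ hx hy =>
        show B (x + y) (p u) = 0
        simp only [map_add, LinearMap.add_apply]
        rw [show B x (p u) = 0 from hx, show B y (p u) = 0 from hy, add_zero]
      | smul c x _ hx =>
        show B (c • x) (p u) = 0
        simp only [LinearMap.map_smul, LinearMap.smul_apply, smul_eq_mul]
        rw [show B x (p u) = 0 from hx, mul_zero]
    intro u hu w hw
    exact hsub hw u hu
  have hW : finrank ℝ (span ℝ (p '' S)) ≤ 2 := by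
    apply finrank_isotropic_le
    intro w hw u hu
    exact hiso' u hu w hw
  have hker : finrank ℝ (LinearMap.ker r) ≤ 1 := by
    have hinj : Function.Injective ((LinearMap.proj (4 : Fin 5) : (Fin 5 → ℝ) →ₗ[ℝ] ℝ).comp
        (V.subtype.comp (LinearMap.ker r).subtype)) := by
      intro x y hxy
      have hx4 : (x.1 : Fin 5 → ℝ) 4 = (y.1 : Fin 5 → ℝ) 4 := hxy
      apply Subtype.ext; apply Subtype.ext
      funext i
      have hfirst : ∀ w : LinearMap.ker r, ∀ j : Fin 4,
          (w.1 : Fin 5 → ℝ) (Fin.castSucc j) = 0 := by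
        intro w j
        have hw0 : r w.1 = 0 := w.2
        exact congrFun hw0 j
      fin_cases i
      · simpa using (hfirst x 0).trans (hfirst y 0).symm
      · simpa using (hfirst x 1).trans (hfirst y 1).symm
      · simpa using (hfirst x 2).trans (hfirst y 2).symm
      · simpa using (hfirst x 3).trans (hfirst y 3).symm
      · exact hx4
    have := LinearMap.finrank_le_finrank_of_injective hinj
    simpa using this
  rw [← hrange] at hW
  omega

lemma B_p_coords {x y : GL (Fin 4) ℝ} {a b c d z a' b' c' d' z' : ℝ}
    (hx : (x : Matrix (Fin 4) (Fin 4) ℝ) = mat a b c d z)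
    (hy : (y : Matrix (Fin 4) (Fin 4) ℝ) = mat a' b' c' d' z')
    (hcomm : x * y = y * x) :
    B (p (coords x)) (p (coords y)) = 0 := by
  have hsym := comm_symplectic hx hy hcomm
  rw [B_apply]
  simp only [p_apply, coords_eq x hx, coords_eq y hy]
  have e0 : Fin.castSucc (0 : Fin 4) = (0 : Fin 5) := rfl
  have e1 : Fin.castSucc (1 : Fin 4) = (1 : Fin 5) := rfl
  have e2 : Fin.castSucc (2 : Fin 4) = (2 : Fin 5) := rfl
  have e3 : Fin.castSucc (3 : Fin 4) = (3 : Fin 5) := rfl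
  rw [e0, e1, e2, e3]
  simp
  linarith

/-- The additive subgroup of `ℝ⁵` corresponding to a commuting subgroup of `Heis₅`. -/
def lattice (Γ : Subgroup (GL (Fin 4) ℝ))
    (hΓ : (Γ : Set (GL (Fin 4) ℝ)) ⊆ Heis5Set)
    (habel : ∀ x ∈ Γ, ∀ y ∈ Γ, x * y = y * x) : AddSubgroup (Fin 5 → ℝ) where
  carrier := coords '' (Γ : Set (GL (Fin 4) ℝ))
  zero_mem' := ⟨1, Γ.one_mem, coords_one⟩
  add_mem' := by
    rintro u v ⟨x, hx, rfl⟩ ⟨y, hy, rfl⟩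
    obtain ⟨a, b, c, d, z, hxm⟩ := hΓ hx
    obtain ⟨a', b', c', d', z', hym⟩ := hΓ hy
    exact ⟨x * y, Γ.mul_mem hx hy, coords_mul hxm hym (habel x hx y hy)⟩
  neg_mem' := by
    rintro u ⟨x, hx, rfl⟩
    obtain ⟨a, b, c, d, z, hxm⟩ := hΓ hx
    exact ⟨x⁻¹, Γ.inv_mem hx, coords_inv hxm⟩

end Heis5Aux

open Heis5Aux Module Submodule in
/-- Every discrete abelian subgroup of `Heis₅` is free abelian of rank at most `3`,
i.e. isomorphic to `ℤᵏ` for some `k ≤ 3`. -/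
theorem discrete_abelian_subgroup_heis5
    (Γ : Subgroup (Matrix.GeneralLinearGroup (Fin 4) ℝ))
    (hΓ : (Γ : Set (Matrix.GeneralLinearGroup (Fin 4) ℝ)) ⊆ Heis5Set)
    (habel : ∀ x ∈ Γ, ∀ y ∈ Γ, x * y = y * x)
    (hdisc : DiscreteTopology ↥(Γ : Set (Matrix.GeneralLinearGroup (Fin 4) ℝ))) :
    ∃ k : ℕ, k ≤ 3 ∧ Nonempty (↥Γ ≃* Multiplicative (Fin k → ℤ)) := by
  classical
  set L₀ : AddSubgroup (Fin 5 → ℝ) := Heis5Aux.lattice Γ hΓ habel with hL₀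
  set L : Submodule ℤ (Fin 5 → ℝ) := AddSubgroup.toIntSubmodule L₀ with hL
  have hmemL₀ : ∀ v ∈ L₀, toGL v ∈ Γ := by
    rintro v ⟨x, hx, rfl⟩
    obtain ⟨a, b, c, d, z, hxm⟩ := hΓ hx
    rwa [toGL_of_mat x hxm]
  -- discreteness of the additive group L
  have hdiscL : DiscreteTopology L := by
    have cont : Continuous (fun v : L =>
        (⟨toGL v.1, hmemL₀ v.1 v.2⟩ : ↥(Γ : Set (GL (Fin 4) ℝ)))) :=
      (continuous_toGL.comp continuous_subtype_val).subtype_mk _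
    have inj : Function.Injective (fun v : L =>
        (⟨toGL v.1, hmemL₀ v.1 v.2⟩ : ↥(Γ : Set (GL (Fin 4) ℝ)))) := by
      intro v w h
      exact Subtype.ext (toGL_injective (congrArg Subtype.val h))
    exact DiscreteTopology.of_continuous_injective cont inj
  -- the isotropy condition
  have hiso : ∀ u ∈ (L : Set (Fin 5 → ℝ)), ∀ w ∈ (L : Set (Fin 5 → ℝ)),
      B (p u) (p w) = 0 := by
    rintro _ ⟨x, hx, rfl⟩ _ ⟨y, hy, rfl⟩
    obtain ⟨a, b, c, d, z, hxm⟩ := hΓ hx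
    obtain ⟨a', b', c', d', z', hym⟩ := hΓ hy
    exact B_p_coords hxm hym (habel x hx y hy)
  -- the span of L
  set V : Submodule ℝ (Fin 5 → ℝ) := span ℝ (L : Set (Fin 5 → ℝ)) with hV
  have hVle : finrank ℝ V ≤ 3 := finrank_span_le_three _ hiso
  have hsub : ∀ v ∈ L, v ∈ V := fun v hv => Submodule.subset_span hv
  set L' : Submodule ℤ ↥V := L.comap ((V.subtype).restrictScalars ℤ) with hL'
  haveI hdiscL' : DiscreteTopology L' := by
    have cont : Continuous (fun x : L' => (⟨x.1.1, x.2⟩ : L)) :=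
      (continuous_subtype_val.comp continuous_subtype_val).subtype_mk _
    have inj : Function.Injective (fun x : L' => (⟨x.1.1, x.2⟩ : L)) := by
      intro x y h
      apply Subtype.ext; apply Subtype.ext
      exact congrArg (fun t : ↥L => (t : Fin 5 → ℝ)) h
    exact DiscreteTopology.of_continuous_injective cont inj
  haveI hzlat : IsZLattice ℝ L' := by
    constructor
    apply Submodule.map_injective_of_injective (Submodule.injective_subtype V)
    rw [Submodule.map_span, Submodule.map_top, Submodule.range_subtype]
    have himg : V.subtype '' (L' : Set ↥V) = (L : Set (Fin 5 → ℝ)) := by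
      ext v
      constructor
      · rintro ⟨w, hw, rfl⟩; exact hw
      · intro hv; exact ⟨⟨v, hsub v hv⟩, hv, rfl⟩
    rw [himg]
  haveI : Module.Free ℤ ↥L' := ZLattice.module_free ℝ L'
  haveI : Module.Finite ℤ ↥L' := ZLattice.module_finite ℝ L'
  have hk : finrank ℤ ↥L' = finrank ℝ ↥V := ZLattice.rank ℝ L'
  refine ⟨finrank ℤ ↥L', by omega, ?_⟩
  -- the multiplicative equivalence
  have hcoords_mem : ∀ g : ↥Γ, coords (g : GL (Fin 4) ℝ) ∈ L₀ := fun g => ⟨g.1, g.2, rfl⟩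
  have hbij : Function.Bijective (fun g : ↥Γ =>
      (Multiplicative.ofAdd (⟨coords (g : GL (Fin 4) ℝ), hcoords_mem g⟩ : L₀) :
        Multiplicative ↥L₀)) := by
    constructor
    · intro x y h
      have hco : coords (x : GL (Fin 4) ℝ) = coords (y : GL (Fin 4) ℝ) :=
        congrArg Subtype.val h
      obtain ⟨a, b, c, d, z, hxm⟩ := hΓ x.2
      obtain ⟨a', b', c', d', z', hym⟩ := hΓ y.2
      have : (x : GL (Fin 4) ℝ) = (y : GL (Fin 4) ℝ) := by
        rw [← toGL_of_mat _ hxm, ← toGL_of_mat _ hym, hco]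
      exact Subtype.ext this
    · rintro ⟨v, x, hx, rfl⟩
      exact ⟨⟨x, hx⟩, rfl⟩
  have hmul : ∀ x y : ↥Γ,
      (Multiplicative.ofAdd (⟨coords ((x * y : ↥Γ) : GL (Fin 4) ℝ), hcoords_mem (x*y)⟩ : L₀)) =
      (Multiplicative.ofAdd (⟨coords (x : GL (Fin 4) ℝ), hcoords_mem x⟩ : L₀)) *
      (Multiplicative.ofAdd (⟨coords (y : GL (Fin 4) ℝ), hcoords_mem y⟩ : L₀)) := by
    intro x y
    obtain ⟨a, b, c, d, z, hxm⟩ := hΓ x.2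
    obtain ⟨a', b', c', d', z', hym⟩ := hΓ y.2
    apply Subtype.ext
    show coords ((x : GL (Fin 4) ℝ) * (y : GL (Fin 4) ℝ)) =
      coords (x : GL (Fin 4) ℝ) + coords (y : GL (Fin 4) ℝ)
    exact coords_mul hxm hym (habel x.1 x.2 y.1 y.2)
  let e1 : ↥Γ ≃* Multiplicative ↥L₀ := MulEquiv.mk' (Equiv.ofBijective _ hbij) hmul
  let e2 : ↥L₀ ≃+ ↥L' :=
    { toFun := fun x => ⟨⟨x.1, hsub x.1 x.2⟩, x.2⟩
      invFun := fun y => ⟨y.1.1, y.2⟩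
      left_inv := fun x => rfl
      right_inv := fun y => rfl
      map_add' := fun x y => rfl }
  let bb := Module.Free.chooseBasis ℤ ↥L'
  have hcard : Fintype.card (Module.Free.ChooseBasisIndex ℤ ↥L') = finrank ℤ ↥L' :=
    (Module.finrank_eq_card_chooseBasisIndex ℤ ↥L').symm
  let e3 : ↥L' ≃ₗ[ℤ] (Fin (finrank ℤ ↥L') → ℤ) :=
    (bb.reindex (Fintype.equivFinOfCardEq hcard)).equivFun
  exact ⟨e1.trans (AddEquiv.toMultiplicative (e2.trans e3.toAddEquiv))⟩
end
end
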